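/- Let M = K(a,b,c,d) be a 4×4 K3 Markov matrix with x = a+b−c−d > 0, y = a−b+c−d > 0, z = a−b−c+d > 0, and let Q := S · diag(0, log x, log y, log z) · S⁻¹ be its principal logarithm. Then Q is a rate matrix (i.e. M is K3-embeddable) if and only if x ≥ y·z, y ≥ x·z and z ≥ x·y. -/
import Mathlib


/-- The Kimura 3ST matrix `K(a,b,c,d)`. -/
def K {α : Type*} (a b c d : α) : Matrix (Fin 4) (Fin 4) α :=
  !![a, b, c, d;
     b, a, d, c;
     c, d, a, b;
     d, c, b, a]

/-- The 4×4 Hadamard matrix `S` (over ℝ). -/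
def S : Matrix (Fin 4) (Fin 4) ℝ :=
  !![1,  1,  1,  1;
     1,  1, -1, -1;
     1, -1,  1, -1;
     1, -1, -1,  1]

/-- A Markov matrix: nonnegative entries, rows sum to 1. -/
def IsMarkov {k : ℕ} (M : Matrix (Fin k) (Fin k) ℝ) : Prop :=
  (∀ i j, 0 ≤ M i j) ∧ ∀ i, ∑ j, M i j = 1

/-- A rate matrix: nonnegative off-diagonal entries, rows sum to 0. -/
def IsRate {k : ℕ} (Q : Matrix (Fin k) (Fin k) ℝ) : Prop :=
  (∀ i j, i ≠ j → 0 ≤ Q i j) ∧ ∀ i, ∑ j, Q i j = 0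

noncomputable def Si : Matrix (Fin 4) (Fin 4) ℝ :=
  !![1/4,  1/4,  1/4,  1/4;
     1/4,  1/4, -(1/4), -(1/4);
     1/4, -(1/4),  1/4, -(1/4);
     1/4, -(1/4), -(1/4),  1/4]

lemma Sinv : S⁻¹ = Si := by
  have h : S * Si = 1 := by
    ext i j
    fin_cases i <;> fin_cases j <;>
      simp [S, Si, Matrix.mul_apply, Fin.sum_univ_four, Matrix.one_apply, Matrix.vecHead, Matrix.vecTail] <;> norm_num
  rw [Matrix.inv_eq_right_inv h]

/-- For a K3 Markov matrix with positive eigenvalues `x, y, z`, the principal logarithm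
`S · diag(0, log x, log y, log z) · S⁻¹` is a rate matrix iff `x ≥ yz`, `y ≥ xz`, `z ≥ xy`. -/
theorem stmt_7 (a b c d : ℝ) (hM : IsMarkov (K a b c d))
    (hx : 0 < a + b - c - d) (hy : 0 < a - b + c - d) (hz : 0 < a - b - c + d) :
    IsRate
      (S * Matrix.diagonal
          ![0, Real.log (a + b - c - d), Real.log (a - b + c - d), Real.log (a - b - c + d)]
        * S⁻¹) ↔
    ((a - b + c - d) * (a - b - c + d) ≤ a + b - c - d ∧
     (a + b - c - d) * (a - b - c + d) ≤ a - b + c - d ∧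
     (a + b - c - d) * (a - b + c - d) ≤ a - b - c + d) := by
  set x := a + b - c - d
  set y := a - b + c - d
  set z := a - b - c + d
  set l1 := Real.log x
  set l2 := Real.log y
  set l3 := Real.log z
  have hQ : S * Matrix.diagonal ![0, l1, l2, l3] * S⁻¹ =
      !![(l1+l2+l3)/4, (l1-l2-l3)/4, (-l1+l2-l3)/4, (-l1-l2+l3)/4;
         (l1-l2-l3)/4, (l1+l2+l3)/4, (-l1-l2+l3)/4, (-l1+l2-l3)/4;
         (-l1+l2-l3)/4, (-l1-l2+l3)/4, (l1+l2+l3)/4, (l1-l2-l3)/4;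
         (-l1-l2+l3)/4, (-l1+l2-l3)/4, (l1-l2-l3)/4, (l1+l2+l3)/4] := by
    rw [Sinv]
    ext i j
    fin_cases i <;> fin_cases j <;>
      simp [S, Si, Matrix.mul_apply, Matrix.diagonal_apply, Fin.sum_univ_four,
        Matrix.vecMul_diagonal, Matrix.vecHead, Matrix.vecTail] <;> ring
  rw [hQ]
  have e1 : (l2 + l3 ≤ l1) ↔ y * z ≤ x := by
    rw [← Real.log_mul hy.ne' hz.ne', Real.log_le_log_iff (by positivity) hx]
  have e2 : (l1 + l3 ≤ l2) ↔ x * z ≤ y := by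
    rw [← Real.log_mul hx.ne' hz.ne', Real.log_le_log_iff (by positivity) hy]
  have e3 : (l1 + l2 ≤ l3) ↔ x * y ≤ z := by
    rw [← Real.log_mul hx.ne' hy.ne', Real.log_le_log_iff (by positivity) hz]
  constructor
  · rintro ⟨h, -⟩
    refine ⟨e1.mp ?_, e2.mp ?_, e3.mp ?_⟩
    · have := h 0 1 (by decide); simp at this; linarith
    · have := h 0 2 (by decide); simp at this; linarith
    · have := h 0 3 (by decide); simp at this; linarith
  · rintro ⟨h1, h2, h3⟩
    have g1 := e1.mpr h1
    have g2 := e2.mpr h2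
    have g3 := e3.mpr h3
    constructor
    · intro i j hij
      fin_cases i <;> fin_cases j <;> simp_all <;> linarith
    · intro i
      fin_cases i <;> simp [Fin.sum_univ_four] <;> ring
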